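/- (Calderón–Zygmund dyadic decomposition.) Let Q₁ be the unit cube in ℝ^N, let A ⊂ B ⊂ Q₁ be measurable sets, let δ₁, δ₂ ∈ (0,1) and L ∈ ℕ. Suppose: (1) |A| ≤ δ₁; (2) for every dyadic subcube Q ∈ 𝒟_ℓ of Q₁ of generation ℓ ≤ L, if |Q ∩ A| > δ₁|Q| then pre(Q) ⊂ B; (3) for every Q ∈ 𝒟_L, if |Q ∩ A| > δ₂|Q| then Q ⊂ B. Then |A| ≤ δ₁|B| + δ₂. -/

import Mathlib

/-! For a dyadic cube `Q` of generation `ℓ ≤ L` with `|Q ∩ A| ≤ δ₁ |Q|` one shows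
`|Q ∩ A| ≤ δ₁ |Q ∩ B| + δ₂ |Q|` by downward induction on `ℓ`. At generation `L`, either `Q` has
`A`-density at most `δ₂`, or `Q ⊆ B` by (3). At a coarser generation, either some child of `Q` has
`A`-density above `δ₁`, and then `Q ⊆ B` by (2), or every child satisfies the bound, and the bounds
add up because the `2 ^ N` children tile `Q` up to a null set. The unit cube is sparse by (1). -/

open MeasureTheory Set

noncomputable section

/-- The open dyadic subcube of the unit cube `(0,1)^N` of generation `ℓ` indexed by
`k : Fin N → ℕ` (meaningful when `k i < 2 ^ ℓ` for all `i`). -/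
def dyadicCube (N : ℕ) (ℓ : ℕ) (k : Fin N → ℕ) : Set (EuclideanSpace ℝ (Fin N)) :=
  {x | ∀ i, (k i : ℝ) / 2 ^ ℓ < x i ∧ x i < ((k i : ℝ) + 1) / 2 ^ ℓ}

open scoped ENNReal

section DyadicCube

variable {N : ℕ}

theorem dyadicCube_eq_preimage (ℓ : ℕ) (k : Fin N → ℕ) :
    dyadicCube N ℓ k = (MeasurableEquiv.toLp 2 (Fin N → ℝ)).symm ⁻¹'
      univ.pi fun i => Ioo ((k i : ℝ) / 2 ^ ℓ) (((k i : ℝ) + 1) / 2 ^ ℓ) := by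
  ext x
  simp [dyadicCube]

theorem measurableSet_dyadicCube (ℓ : ℕ) (k : Fin N → ℕ) : MeasurableSet (dyadicCube N ℓ k) := by
  rw [dyadicCube_eq_preimage]
  exact MeasurableEquiv.measurable _ (.univ_pi fun _ => measurableSet_Ioo)

theorem volume_dyadicCube (ℓ : ℕ) (k : Fin N → ℕ) :
    volume (dyadicCube N ℓ k) = (2⁻¹ ^ ℓ) ^ N := by
  have side (i : Fin N) :
      volume (Ioo ((k i : ℝ) / 2 ^ ℓ) (((k i : ℝ) + 1) / 2 ^ ℓ)) = 2⁻¹ ^ ℓ := by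
    rw [Real.volume_Ioo, ← sub_div, add_sub_cancel_left, one_div, ← inv_pow,
      ENNReal.ofReal_pow (by norm_num), ENNReal.ofReal_inv_of_pos two_pos, ENNReal.ofReal_ofNat]
  rw [dyadicCube_eq_preimage, (EuclideanSpace.volume_preserving_symm_measurableEquiv_toLp
    (Fin N)).measure_preimage (MeasurableSet.univ_pi fun _ => measurableSet_Ioo).nullMeasurableSet,
    volume_pi_pi]
  simp [side]

theorem disjoint_dyadicCube {ℓ : ℕ} {k k' : Fin N → ℕ} (h : k ≠ k') :
    Disjoint (dyadicCube N ℓ k) (dyadicCube N ℓ k') := by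
  obtain ⟨i, hi⟩ := Function.ne_iff.mp h
  rw [Set.disjoint_left]
  intro x hx hx'
  rcases hi.lt_or_gt with hlt | hlt
  · have : ((k i : ℝ) + 1) / 2 ^ ℓ ≤ k' i / 2 ^ ℓ := by gcongr; exact_mod_cast hlt
    linarith [(hx i).2, (hx' i).1]
  · have : ((k' i : ℝ) + 1) / 2 ^ ℓ ≤ k i / 2 ^ ℓ := by gcongr; exact_mod_cast hlt
    linarith [(hx i).1, (hx' i).2]

def dyadicChildren (k : Fin N → ℕ) : Finset (Fin N → ℕ) :=
  Fintype.piFinset fun i => {2 * k i, 2 * k i + 1}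

theorem mem_dyadicChildren {k k' : Fin N → ℕ} : k' ∈ dyadicChildren k ↔ ∀ i, k' i / 2 = k i := by
  simp only [dyadicChildren, Fintype.mem_piFinset, Finset.mem_insert, Finset.mem_singleton]
  exact forall_congr' fun i => by omega

theorem lt_two_pow_succ_of_mem_dyadicChildren {ℓ : ℕ} {k k' : Fin N → ℕ}
    (hk : ∀ i, k i < 2 ^ ℓ) (hk' : k' ∈ dyadicChildren k) (i : Fin N) : k' i < 2 ^ (ℓ + 1) := by
  rw [pow_succ, ← Nat.div_lt_iff_lt_mul two_pos, mem_dyadicChildren.mp hk' i]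
  exact hk i

theorem card_dyadicChildren (k : Fin N → ℕ) : (dyadicChildren k).card = 2 ^ N := by
  simp [dyadicChildren, Fintype.card_piFinset]

theorem dyadicCube_subset_of_mem_dyadicChildren {ℓ : ℕ} {k k' : Fin N → ℕ}
    (hk' : k' ∈ dyadicChildren k) :
    dyadicCube N (ℓ + 1) k' ⊆ dyadicCube N ℓ k := by
  intro x hx i
  have hk := mem_dyadicChildren.mp hk' i
  have hlo : (2 * k i : ℝ) ≤ k' i := by exact_mod_cast (by omega : 2 * k i ≤ k' i)
  have hhi : (k' i : ℝ) + 1 ≤ 2 * k i + 2 := by exact_mod_cast (by omega : k' i + 1 ≤ 2 * k i + 2)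
  obtain ⟨h1, h3⟩ := hx i
  rw [pow_succ] at h1 h3
  constructor
  · calc (k i : ℝ) / 2 ^ ℓ = 2 * k i / (2 ^ ℓ * 2) := by field_simp
      _ ≤ k' i / (2 ^ ℓ * 2) := by gcongr
      _ < x i := h1
  · calc x i < (k' i + 1) / (2 ^ ℓ * 2) := h3
      _ ≤ (2 * k i + 2) / (2 ^ ℓ * 2) := by gcongr
      _ = (k i + 1) / 2 ^ ℓ := by field_simp

theorem sum_volume_dyadicChildren (ℓ : ℕ) (k : Fin N → ℕ) :
    ∑ k' ∈ dyadicChildren k, volume (dyadicCube N (ℓ + 1) k') = volume (dyadicCube N ℓ k) := by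
  simp only [volume_dyadicCube, Finset.sum_const, card_dyadicChildren, nsmul_eq_mul]
  rw [Nat.cast_pow, Nat.cast_ofNat, ← mul_pow, pow_succ, mul_left_comm,
    ENNReal.mul_inv_cancel two_ne_zero ENNReal.ofNat_ne_top, mul_one]

theorem pairwiseDisjoint_dyadicCube (ℓ : ℕ) (s : Set (Fin N → ℕ)) :
    s.PairwiseDisjoint (dyadicCube N ℓ) :=
  fun _ _ _ _ h => disjoint_dyadicCube h

theorem volume_dyadicCube_diff_dyadicChildren (ℓ : ℕ) (k : Fin N → ℕ) :
    volume (dyadicCube N ℓ k \ ⋃ k' ∈ dyadicChildren k, dyadicCube N (ℓ + 1) k') = 0 := by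
  have hunion : volume (⋃ k' ∈ dyadicChildren k, dyadicCube N (ℓ + 1) k') =
      volume (dyadicCube N ℓ k) := by
    rw [measure_biUnion_finset (pairwiseDisjoint_dyadicCube _ _)
      fun k' _ => measurableSet_dyadicCube _ k', sum_volume_dyadicChildren]
  rw [measure_sdiff (iUnion₂_subset fun _ => dyadicCube_subset_of_mem_dyadicChildren)
    (Finset.measurableSet_biUnion _ fun k' _ => measurableSet_dyadicCube _ k').nullMeasurableSet
    (by rw [hunion, volume_dyadicCube]; finiteness), hunion, tsub_self]

theorem volume_dyadicCube_inter_le_sum (S : Set (EuclideanSpace ℝ (Fin N))) (ℓ : ℕ)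
    (k : Fin N → ℕ) :
    volume (dyadicCube N ℓ k ∩ S) ≤
      ∑ k' ∈ dyadicChildren k, volume (dyadicCube N (ℓ + 1) k' ∩ S) := by
  have hcover : dyadicCube N ℓ k ∩ S ⊆ (⋃ k' ∈ dyadicChildren k, dyadicCube N (ℓ + 1) k' ∩ S) ∪
      (dyadicCube N ℓ k \ ⋃ k' ∈ dyadicChildren k, dyadicCube N (ℓ + 1) k') := by
    rintro x ⟨hxQ, hxS⟩
    by_cases hx : x ∈ ⋃ k' ∈ dyadicChildren k, dyadicCube N (ℓ + 1) k'
    · left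
      simp only [mem_iUnion] at hx ⊢
      obtain ⟨k', hk', hxk'⟩ := hx
      exact ⟨k', hk', hxk', hxS⟩
    · exact Or.inr ⟨hxQ, hx⟩
  calc volume (dyadicCube N ℓ k ∩ S)
      ≤ volume (⋃ k' ∈ dyadicChildren k, dyadicCube N (ℓ + 1) k' ∩ S) +
        volume (dyadicCube N ℓ k \ ⋃ k' ∈ dyadicChildren k, dyadicCube N (ℓ + 1) k') :=
        (measure_mono hcover).trans (measure_union_le _ _)
    _ ≤ _ := by
      rw [volume_dyadicCube_diff_dyadicChildren, add_zero]
      exact measure_biUnion_finset_le _ _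

theorem sum_volume_dyadicCube_inter_le {S : Set (EuclideanSpace ℝ (Fin N))} (hS : MeasurableSet S)
    (ℓ : ℕ) (k : Fin N → ℕ) :
    ∑ k' ∈ dyadicChildren k, volume (dyadicCube N (ℓ + 1) k' ∩ S) ≤
      volume (dyadicCube N ℓ k ∩ S) := by
  rw [← measure_biUnion_finset
    (fun _ _ _ _ h => (disjoint_dyadicCube h).mono inter_subset_left inter_subset_left)
    fun k' _ => (measurableSet_dyadicCube _ k').inter hS]
  exact measure_mono (iUnion₂_subset fun k' hk' =>
    inter_subset_inter_left _ (dyadicCube_subset_of_mem_dyadicChildren hk'))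

end DyadicCube

theorem measure_inter_le_mul_add_of_subset {α : Type*} [MeasurableSpace α] {μ : Measure α}
    {A B Q : Set α} {δ₁ : ℝ≥0∞} (δ₂ : ℝ≥0∞) (hQB : Q ⊆ B) (hQ : μ (Q ∩ A) ≤ δ₁ * μ Q) :
    μ (Q ∩ A) ≤ δ₁ * μ (Q ∩ B) + δ₂ * μ Q := by
  rw [inter_eq_left.mpr hQB]
  exact hQ.trans le_self_add

section Decomposition

variable {N L : ℕ} {A B : Set (EuclideanSpace ℝ (Fin N))} {δ₁ δ₂ : ℝ≥0∞}

theorem volume_dyadicCube_inter_le_of_dyadicChildren (hB : MeasurableSet B) {ℓ : ℕ}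
    {k : Fin N → ℕ} (h : ∀ k' ∈ dyadicChildren k, volume (dyadicCube N (ℓ + 1) k' ∩ A) ≤
      δ₁ * volume (dyadicCube N (ℓ + 1) k' ∩ B) + δ₂ * volume (dyadicCube N (ℓ + 1) k')) :
    volume (dyadicCube N ℓ k ∩ A) ≤
      δ₁ * volume (dyadicCube N ℓ k ∩ B) + δ₂ * volume (dyadicCube N ℓ k) :=
  calc volume (dyadicCube N ℓ k ∩ A)
      ≤ ∑ k' ∈ dyadicChildren k, volume (dyadicCube N (ℓ + 1) k' ∩ A) :=
        volume_dyadicCube_inter_le_sum A ℓ k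
    _ ≤ ∑ k' ∈ dyadicChildren k, (δ₁ * volume (dyadicCube N (ℓ + 1) k' ∩ B) +
          δ₂ * volume (dyadicCube N (ℓ + 1) k')) := Finset.sum_le_sum h
    _ = δ₁ * ∑ k' ∈ dyadicChildren k, volume (dyadicCube N (ℓ + 1) k' ∩ B) +
          δ₂ * ∑ k' ∈ dyadicChildren k, volume (dyadicCube N (ℓ + 1) k') := by
        rw [Finset.sum_add_distrib, Finset.mul_sum, Finset.mul_sum]
    _ ≤ δ₁ * volume (dyadicCube N ℓ k ∩ B) + δ₂ * volume (dyadicCube N ℓ k) := by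
        rw [sum_volume_dyadicChildren]
        gcongr
        exact sum_volume_dyadicCube_inter_le hB ℓ k

theorem volume_dyadicCube_inter_le_of_sparse (hB : MeasurableSet B)
    (hparent : ∀ ℓ < L, ∀ k : Fin N → ℕ, (∀ i, k i < 2 ^ (ℓ + 1)) →
      δ₁ * volume (dyadicCube N (ℓ + 1) k) < volume (dyadicCube N (ℓ + 1) k ∩ A) →
      dyadicCube N ℓ (fun i => k i / 2) ⊆ B)
    (hfine : ∀ k : Fin N → ℕ, (∀ i, k i < 2 ^ L) →
      δ₂ * volume (dyadicCube N L k) < volume (dyadicCube N L k ∩ A) → dyadicCube N L k ⊆ B)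
    {ℓ : ℕ} (hℓ : ℓ ≤ L) {k : Fin N → ℕ} (hk : ∀ i, k i < 2 ^ ℓ)
    (hsparse : volume (dyadicCube N ℓ k ∩ A) ≤ δ₁ * volume (dyadicCube N ℓ k)) :
    volume (dyadicCube N ℓ k ∩ A) ≤
      δ₁ * volume (dyadicCube N ℓ k ∩ B) + δ₂ * volume (dyadicCube N ℓ k) := by
  induction hℓ using Nat.decreasingInduction generalizing k with
  | self =>
    by_cases hdense : δ₂ * volume (dyadicCube N L k) < volume (dyadicCube N L k ∩ A)
    · exact measure_inter_le_mul_add_of_subset δ₂ (hfine k hk hdense) hsparse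
    · exact (not_lt.mp hdense).trans le_add_self
  | of_succ ℓ hℓL ih =>
    by_cases hdense : ∃ k' ∈ dyadicChildren k,
        δ₁ * volume (dyadicCube N (ℓ + 1) k') < volume (dyadicCube N (ℓ + 1) k' ∩ A)
    · obtain ⟨k', hk', hdense'⟩ := hdense
      have hQB := hparent ℓ hℓL k' (lt_two_pow_succ_of_mem_dyadicChildren hk hk') hdense'
      rw [show (fun i => k' i / 2) = k from funext (mem_dyadicChildren.mp hk')] at hQB
      exact measure_inter_le_mul_add_of_subset δ₂ hQB hsparse
    · push Not at hdense
      exact volume_dyadicCube_inter_le_of_dyadicChildren hB fun k' hk' =>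
        ih (lt_two_pow_succ_of_mem_dyadicChildren hk hk') (hdense k' hk')

end Decomposition

theorem calderon_zygmund_dyadic_decomposition_general (N : ℕ) (L : ℕ) (δ₁ δ₂ : ℝ)
    (A B : Set (EuclideanSpace ℝ (Fin N)))
    (hB : MeasurableSet B)
    (hAB : A ⊆ B) (hBQ : B ⊆ dyadicCube N 0 (fun _ => 0))
    (h1 : volume A ≤ ENNReal.ofReal δ₁)
    (h2 : ∀ ℓ : ℕ, 1 ≤ ℓ → ℓ ≤ L → ∀ k : Fin N → ℕ, (∀ i, k i < 2 ^ ℓ) →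
      ENNReal.ofReal δ₁ * volume (dyadicCube N ℓ k) < volume (dyadicCube N ℓ k ∩ A) →
      dyadicCube N (ℓ - 1) (fun i => k i / 2) ⊆ B)
    (h3 : ∀ k : Fin N → ℕ, (∀ i, k i < 2 ^ L) →
      ENNReal.ofReal δ₂ * volume (dyadicCube N L k) < volume (dyadicCube N L k ∩ A) →
      dyadicCube N L k ⊆ B) :
    volume A ≤ ENNReal.ofReal δ₁ * volume B + ENNReal.ofReal δ₂ := by
  have hAQ : dyadicCube N 0 (fun _ => 0) ∩ A = A := inter_eq_right.mpr (hAB.trans hBQ)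
  have hBQ' : dyadicCube N 0 (fun _ => 0) ∩ B = B := inter_eq_right.mpr hBQ
  have hvol : volume (dyadicCube N 0 (fun _ => 0)) = 1 := by simp [volume_dyadicCube]
  have key := volume_dyadicCube_inter_le_of_sparse hB
    (fun ℓ hℓ k hk hdense => h2 (ℓ + 1) le_add_self hℓ k hk hdense) h3 (Nat.zero_le L)
    (k := fun _ => 0) (fun _ => Nat.one_pos) (by rwa [hAQ, hvol, mul_one])
  rwa [hAQ, hBQ', hvol, mul_one] at key

/-- Calderón–Zygmund dyadic decomposition. -/
theorem calderon_zygmund_dyadic_decomposition (N : ℕ) (L : ℕ) (δ₁ δ₂ : ℝ)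
    (hδ₁ : δ₁ ∈ Set.Ioo (0 : ℝ) 1) (hδ₂ : δ₂ ∈ Set.Ioo (0 : ℝ) 1)
    (A B : Set (EuclideanSpace ℝ (Fin N)))
    (hA : MeasurableSet A) (hB : MeasurableSet B)
    (hAB : A ⊆ B) (hBQ : B ⊆ dyadicCube N 0 (fun _ => 0))
    (h1 : volume A ≤ ENNReal.ofReal δ₁)
    (h2 : ∀ ℓ : ℕ, 1 ≤ ℓ → ℓ ≤ L → ∀ k : Fin N → ℕ, (∀ i, k i < 2 ^ ℓ) →
      ENNReal.ofReal δ₁ * volume (dyadicCube N ℓ k) < volume (dyadicCube N ℓ k ∩ A) →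
      dyadicCube N (ℓ - 1) (fun i => k i / 2) ⊆ B)
    (h3 : ∀ k : Fin N → ℕ, (∀ i, k i < 2 ^ L) →
      ENNReal.ofReal δ₂ * volume (dyadicCube N L k) < volume (dyadicCube N L k ∩ A) →
      dyadicCube N L k ⊆ B) :
    volume A ≤ ENNReal.ofReal δ₁ * volume B + ENNReal.ofReal δ₂ :=
  calderon_zygmund_dyadic_decomposition_general N L δ₁ δ₂ A B hB hAB hBQ h1 h2 h3
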